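/- Let $f = x^2y^2 + y^2z^2 + z^2x^2 - 2xyz(x+y+z) \in \mathbb{C}[x,y,z]$ (the three-cuspidal quartic). Then the Hilbert–Poincaré series of the Milnor algebra $M(f) = S/J_f$ satisfies $\dim M(f)_0 = 1$, $\dim M(f)_1 = 3$, $\dim M(f)_2 = 6$, $\dim M(f)_3 = 7$, and $\dim M(f)_k = 6$ for all $k \geq 4$. -/

import Mathlib

/-!
STATEMENT 10: For the three-cuspidal quartic
`f = x²y² + y²z² + z²x² - 2xyz(x+y+z)` in `ℂ[x,y,z]`, the Milnor algebra
`M(f) = S/J_f` satisfies `dim M(f)_0 = 1`, `dim M(f)_1 = 3`, `dim M(f)_2 = 6`,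
`dim M(f)_3 = 7`, and `dim M(f)_k = 6` for all `k ≥ 4`.
-/

open MvPolynomial

noncomputable section

abbrev S3 := MvPolynomial (Fin 3) ℂ

def jacobianIdeal (f : S3) : Ideal S3 :=
  Ideal.span (Set.range fun i : Fin 3 => pderiv i f)

/-- `dim_ℂ (S/I)_k`. -/
def gradedDim (I : Ideal S3) (k : ℕ) : ℕ :=
  Module.finrank ℂ (Submodule.map (Ideal.Quotient.mkₐ ℂ I).toLinearMap
    (homogeneousSubmodule (Fin 3) ℂ k))

/-!
Write `M = S/J_f` and `M₁ = span{x, y, z}`, so that `M(f)_k = M₁ ^ k`. Spanning sets of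
`M₁ ^ (k + 1)` are obtained from those of `M₁ ^ k` by multiplying with `x, y, z` and reducing with
consequences of the Jacobian relations (`xyz = 0`, `x²y² = 0`, `xy³ = y³z`, ...); from degree 4
on, `M₁ ^ k` is spanned by `x^k, x^(k-1)y, y^k, y^(k-1)z, z^k, z^(k-1)x`.

The lower bounds come from the three cusps `(1:0:0), (0:1:0), (0:0:1)`: sending the coordinate of
a cusp to `1` and the other two to `ε` (moving along the cuspidal tangent) kills `J_f`, so it
defines an algebra map `M → ℂ[ε]/(ε²)`. The values and `ε`-coefficients of these three maps are six
functionals on `M`, dual to the six monomials above. In degree 3 they miss one direction: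
`yz² - z²x ∉ J_f`, because the cubics in `J_f` are the linear combinations of the partials.
-/

open scoped Pointwise

section General

variable {σ R : Type*} [CommRing R]

attribute [local instance] MvPolynomial.gradedAlgebra in
theorem MvPolynomial.homogeneousComponent_mul_of_isHomogeneous {p q : MvPolynomial σ R}
    {m n : ℕ} (hq : q.IsHomogeneous n) (h : n ≤ m) :
    homogeneousComponent m (p * q) = homogeneousComponent (m - n) p * q := by
  rw [← decomposition.decompose'_apply, ← decomposition.decompose'_apply]
  exact DirectSum.coe_decompose_mul_of_right_mem_of_le (homogeneousSubmodule σ R) hq h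

theorem MvPolynomial.homogeneousComponent_mem_span_of_mem_span {ι : Type*} [Fintype ι]
    {g : ι → MvPolynomial σ R} {d : ℕ} (hg : ∀ i, (g i).IsHomogeneous d)
    {p : MvPolynomial σ R} (hp : p ∈ Ideal.span (Set.range g)) :
    homogeneousComponent d p ∈ Submodule.span R (Set.range g) := by
  obtain ⟨c, rfl⟩ := Ideal.mem_span_range_iff_exists_fun.mp hp
  rw [map_sum]
  refine Submodule.sum_mem _ fun i _ => ?_
  rw [homogeneousComponent_mul_of_isHomogeneous (hg i) le_rfl, Nat.sub_self,
    homogeneousComponent_zero, ← smul_eq_C_mul]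
  exact Submodule.smul_mem _ _ (Submodule.subset_span ⟨i, rfl⟩)

theorem MvPolynomial.map_homogeneousSubmodule_eq_pow {A : Type*} [Semiring A] [Algebra R A]
    (φ : MvPolynomial σ R →ₐ[R] A) (n : ℕ) :
    (homogeneousSubmodule σ R n).map φ.toLinearMap =
      Submodule.span R (Set.range fun i => φ (X i)) ^ n := by
  rw [← homogeneousSubmodule_one_pow, Submodule.map_pow, homogeneousSubmodule_one_eq_span_X,
    Submodule.map_span, ← Set.range_comp]
  rfl

theorem Submodule.span_pow_succ_le {A : Type*} [Semiring A] [Algebra R A] {g s t : Set A}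
    {n : ℕ} (hs : span R g ^ n ≤ span R s) (hst : ∀ a ∈ s, ∀ b ∈ g, a * b ∈ span R t) :
    span R g ^ (n + 1) ≤ span R t := by
  rw [Submodule.pow_succ]
  calc span R g ^ n * span R g ≤ span R s * span R g := mul_le_mul' hs le_rfl
    _ = span R (s * g) := span_mul_span R s g
    _ ≤ span R t := span_le.mpr <| by rintro _ ⟨a, ha, b, hb, rfl⟩; exact hst a ha b hb

theorem Submodule.pow_mul_mem_pow_succ {A : Type*} [Semiring A] [Algebra R A]
    {V : Submodule R A} {a b : A} (ha : a ∈ V) (hb : b ∈ V) (e : ℕ) : a ^ e * b ∈ V ^ (e + 1) :=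
  Submodule.pow_succ V ▸ mul_mem_mul (pow_mem_pow V ha e) hb

theorem Submodule.finrank_eq_of_le_span {K M : Type*} [Field K] [AddCommGroup M] [Module K M]
    {W : Submodule K M} {k : ℕ} {b : Fin k → M} (hle : W ≤ span K (Set.range b))
    (hmem : ∀ j, b j ∈ W) (hb : LinearIndependent K b) : Module.finrank K W = k := by
  rw [le_antisymm hle (span_le.mpr (Set.range_subset_iff.mpr hmem)), finrank_span_eq_card hb,
    Fintype.card_fin]

theorem LinearIndependent.of_dual_eq_ite {ι M : Type*} [DecidableEq ι]
    [AddCommGroup M] [Module R M] {b : ι → M} {φ : ι → Module.Dual R M}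
    (hφ : ∀ i j, φ i (b j) = if i = j then 1 else 0) : LinearIndependent R b :=
  .of_pairwise_dual_eq_zero_one b φ (fun i j hij => by simp [hφ, hij]) (fun i => by simp [hφ])

theorem Module.eq_zero_of_mem_span_of_dual_eq_zero {ι M : Type*} [Fintype ι] [DecidableEq ι]
    [AddCommGroup M] [Module R M] {b : ι → M} {φ : ι → Module.Dual R M}
    (hφ : ∀ i j, φ i (b j) = if i = j then 1 else 0) {v : M}
    (hv : v ∈ Submodule.span R (Set.range b)) (h : ∀ i, φ i v = 0) : v = 0 := by
  obtain ⟨c, rfl⟩ := Submodule.mem_span_range_iff_exists_fun R |>.mp hv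
  have hc : ∀ i, c i = 0 := fun i => by simpa [hφ] using h i
  simp [hc]

theorem eq_zero_of_natCast_mul_eq_zero (K : Type*) {A : Type*} [Field K] [CharZero K] [Ring A]
    [Algebra K A] {n : ℕ} (hn : n ≠ 0) {a : A} (h : (n : A) * a = 0) : a = 0 := by
  have hu : IsUnit (n : A) := by
    rw [← map_natCast (algebraMap K A)]
    exact (isUnit_iff_ne_zero.mpr (Nat.cast_ne_zero.mpr hn)).map _
  exact hu.mul_right_eq_zero.mp h

end General

namespace ThreeCuspidalQuartic

open Set Submodule

def quartic : S3 :=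
  X 0 ^ 2 * X 1 ^ 2 + X 1 ^ 2 * X 2 ^ 2 + X 2 ^ 2 * X 0 ^ 2
    - 2 * X 0 * X 1 * X 2 * (X 0 + X 1 + X 2)

theorem isHomogeneous_quartic : quartic.IsHomogeneous 4 := by
  have hX := isHomogeneous_X ℂ (σ := Fin 3)
  have h2 : (2 : S3).IsHomogeneous 0 := by
    rw [← map_ofNat (C : ℂ →+* S3) 2]
    exact isHomogeneous_C _ _
  exact ((((hX 0).pow 2).mul ((hX 1).pow 2)).add (((hX 1).pow 2).mul ((hX 2).pow 2))).add
    (((hX 2).pow 2).mul ((hX 0).pow 2)) |>.sub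
    ((((h2.mul (hX 0)).mul (hX 1)).mul (hX 2)).mul (((hX 0).add (hX 1)).add (hX 2)))

theorem pderiv_quartic (i : Fin 3) :
    pderiv i quartic =
      ![2 * X 0 * X 1 ^ 2 + 2 * X 0 * X 2 ^ 2 - 4 * X 0 * X 1 * X 2 - 2 * X 1 ^ 2 * X 2
          - 2 * X 1 * X 2 ^ 2,
        2 * X 0 ^ 2 * X 1 + 2 * X 1 * X 2 ^ 2 - 2 * X 0 ^ 2 * X 2 - 4 * X 0 * X 1 * X 2
          - 2 * X 0 * X 2 ^ 2,
        2 * X 1 ^ 2 * X 2 + 2 * X 0 ^ 2 * X 2 - 2 * X 0 ^ 2 * X 1 - 2 * X 0 * X 1 ^ 2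
          - 4 * X 0 * X 1 * X 2] i := by
  have h2 : ∀ j : Fin 3, pderiv j (2 : S3) = 0 := fun j => by
    rw [← map_ofNat C 2, pderiv_C]
  fin_cases i <;> simp [quartic, pderiv_X, h2] <;> ring

abbrev M := S3 ⧸ jacobianIdeal quartic

def gen (i : Fin 3) : M := Ideal.Quotient.mk _ (X i)

def x : M := gen 0
def y : M := gen 1
def z : M := gen 2

abbrev M₁ : Submodule ℂ M := span ℂ (range gen)

theorem range_gen : range gen = {x, y, z} := by
  ext v
  simp [Fin.exists_fin_succ, x, y, z, eq_comm]

theorem gen_mem_M₁ (i : Fin 3) : gen i ∈ M₁ :=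
  subset_span ⟨i, rfl⟩

theorem gradedDim_eq_finrank (k : ℕ) :
    gradedDim (jacobianIdeal quartic) k = Module.finrank ℂ ↥(M₁ ^ k) := by
  rw [gradedDim, map_homogeneousSubmodule_eq_pow]
  rfl

theorem mk_pderiv_quartic (i : Fin 3) :
    Ideal.Quotient.mk (jacobianIdeal quartic) (pderiv i quartic) = 0 :=
  Ideal.Quotient.eq_zero_iff_mem.mpr (Ideal.subset_span ⟨i, rfl⟩)

theorem jacobian_rel_x :
    2 * x * y ^ 2 + 2 * x * z ^ 2 - 4 * x * y * z - 2 * y ^ 2 * z - 2 * y * z ^ 2 = 0 := by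
  have h := mk_pderiv_quartic 0
  simp only [pderiv_quartic, Matrix.cons_val, map_sub, map_add, map_mul, map_pow, map_ofNat] at h
  exact h

theorem jacobian_rel_y :
    2 * x ^ 2 * y + 2 * y * z ^ 2 - 2 * x ^ 2 * z - 4 * x * y * z - 2 * x * z ^ 2 = 0 := by
  have h := mk_pderiv_quartic 1
  simp only [pderiv_quartic, Matrix.cons_val, map_sub, map_add, map_mul, map_pow, map_ofNat] at h
  exact h

theorem jacobian_rel_z :
    2 * y ^ 2 * z + 2 * x ^ 2 * z - 2 * x ^ 2 * y - 2 * x * y ^ 2 - 4 * x * y * z = 0 := by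
  have h := mk_pderiv_quartic 2
  simp only [pderiv_quartic, Matrix.cons_val, map_sub, map_add, map_mul, map_pow, map_ofNat] at h
  exact h

theorem x_mul_y_mul_z_eq_zero : x * y * z = 0 :=
  eq_zero_of_natCast_mul_eq_zero ℂ (n := 12) (by norm_num) <| by
    push_cast
    linear_combination -(jacobian_rel_x + jacobian_rel_y + jacobian_rel_z)

theorem x_sq_mul_y_sq_eq_zero : x ^ 2 * y ^ 2 = 0 :=
  eq_zero_of_natCast_mul_eq_zero ℂ (n := 4) (by norm_num) <| by
    push_cast
    linear_combination x * jacobian_rel_x + y * jacobian_rel_y - z * jacobian_rel_z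
      + 4 * (x + y) * x_mul_y_mul_z_eq_zero

theorem y_sq_mul_z_sq_eq_zero : y ^ 2 * z ^ 2 = 0 :=
  eq_zero_of_natCast_mul_eq_zero ℂ (n := 12) (by norm_num) <| by
    push_cast
    linear_combination -(3 * x + y + z) * jacobian_rel_x + (2 * y - z) * jacobian_rel_y
      + (2 * z - y) * jacobian_rel_z

theorem z_sq_mul_x_sq_eq_zero : z ^ 2 * x ^ 2 = 0 :=
  eq_zero_of_natCast_mul_eq_zero ℂ (n := 12) (by norm_num) <| by
    push_cast
    linear_combination (2 * x - z) * jacobian_rel_x - (x + 3 * y + z) * jacobian_rel_y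
      + (2 * z - x) * jacobian_rel_z

theorem x_mul_y_pow_three : x * y ^ 3 = y ^ 3 * z :=
  sub_eq_zero.mp <| eq_zero_of_natCast_mul_eq_zero ℂ (n := 4) (by norm_num) <| by
    push_cast
    linear_combination (y - x) * jacobian_rel_x + (z - y) * jacobian_rel_z

theorem y_mul_z_pow_three : y * z ^ 3 = z ^ 3 * x :=
  sub_eq_zero.mp <| eq_zero_of_natCast_mul_eq_zero ℂ (n := 4) (by norm_num) <| by
    push_cast
    linear_combination (x - z) * jacobian_rel_x + (z - y) * jacobian_rel_y

theorem z_mul_x_pow_three : z * x ^ 3 = x ^ 3 * y :=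
  sub_eq_zero.mp <| eq_zero_of_natCast_mul_eq_zero ℂ (n := 4) (by norm_num) <| by
    push_cast
    linear_combination (y - x) * jacobian_rel_y + (x - z) * jacobian_rel_z

theorem x_mul_y_sq : x * y ^ 2 = y ^ 2 * z + y * z ^ 2 - z ^ 2 * x :=
  sub_eq_zero.mp <| eq_zero_of_natCast_mul_eq_zero ℂ (n := 6) (by norm_num) <| by
    push_cast
    linear_combination 2 * jacobian_rel_x - jacobian_rel_y - jacobian_rel_z

theorem x_sq_mul_z : x ^ 2 * z = x ^ 2 * y + y * z ^ 2 - z ^ 2 * x :=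
  sub_eq_zero.mp <| eq_zero_of_natCast_mul_eq_zero ℂ (n := 6) (by norm_num) <| by
    push_cast
    linear_combination jacobian_rel_x - 2 * jacobian_rel_y + jacobian_rel_z

theorem y_mul_z_sq_ne_z_sq_mul_x : y * z ^ 2 ≠ z ^ 2 * x := by
  intro h
  have hmem : (X 1 * X 2 ^ 2 - X 2 ^ 2 * X 0 : S3) ∈ jacobianIdeal quartic := by
    rw [← Ideal.Quotient.eq_zero_iff_mem]
    exact sub_eq_zero.mpr h
  have hhom : (X 1 * X 2 ^ 2 - X 2 ^ 2 * X 0 : S3).IsHomogeneous 3 :=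
    ((isHomogeneous_X ℂ 1).mul ((isHomogeneous_X ℂ 2).pow 2)).sub
      (((isHomogeneous_X ℂ 2).pow 2).mul (isHomogeneous_X ℂ 0))
  have hspan := homogeneousComponent_mem_span_of_mem_span
    (fun i => isHomogeneous_quartic.pderiv (i := i)) hmem
  rw [homogeneousComponent_eq_self hhom] at hspan
  obtain ⟨c, hc⟩ := (mem_span_range_iff_exists_fun ℂ).mp hspan
  have hev (v : Fin 3 → ℂ) :
      ∑ i, c i * eval v (pderiv i quartic) = v 1 * v 2 ^ 2 - v 2 ^ 2 * v 0 := by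
    simpa [smul_eq_C_mul] using congrArg (eval v) hc
  -- a combination of the evaluations at these points kills the partials but not `yz² - z²x`
  have h1 := hev ![0, 1, 1]
  have h2 := hev ![1, 0, 1]
  have h3 := hev ![1, 2, 0]
  simp [Fin.sum_univ_three, pderiv_quartic] at h1 h2 h3
  exact two_ne_zero (by linear_combination -10 * h1 - 8 * h2 - 3 * h3 : (2 : ℂ) = 0)

open DualNumber in
def cuspPoint (i : Fin 3) : Fin 3 → DualNumber ℂ := fun j => if j = i then 1 else ε

theorem aeval_cuspPoint_pderiv (i k : Fin 3) : aeval (cuspPoint i) (pderiv k quartic) = 0 := by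
  fin_cases i <;> fin_cases k <;>
    simp [pderiv_quartic, cuspPoint, sq, mul_assoc, DualNumber.eps_mul_eps]

def cuspJet (i : Fin 3) : M →ₐ[ℂ] DualNumber ℂ :=
  Ideal.Quotient.liftₐ _ (aeval (cuspPoint i)) fun _ hp =>
    (Ideal.span_le.mpr (by rintro _ ⟨k, rfl⟩; exact aeval_cuspPoint_pderiv i k) :
      jacobianIdeal quartic ≤ RingHom.ker (aeval (cuspPoint i))) hp

@[simp]
theorem cuspJet_gen (i j : Fin 3) : cuspJet i (gen j) = cuspPoint i j :=
  aeval_X _ _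

def cuspValue (i : Fin 3) : Module.Dual ℂ M :=
  (TrivSqZeroExt.fstHom ℂ ℂ ℂ).toLinearMap ∘ₗ (cuspJet i).toLinearMap

def cuspSlope (i : Fin 3) : Module.Dual ℂ M :=
  TrivSqZeroExt.sndHom ℂ ℂ ∘ₗ (cuspJet i).toLinearMap

def cuspFunctional : Fin 6 → Module.Dual ℂ M :=
  ![cuspValue 0, cuspSlope 0, cuspValue 1, cuspSlope 1, cuspValue 2, cuspSlope 2]

theorem cuspValue_gen (i j : Fin 3) : cuspValue i (gen j) = if i = j then 1 else 0 := by
  split_ifs with h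
  · simp [cuspValue, cuspPoint, h]
  · simp [cuspValue, cuspPoint, Ne.symm h]

def stableBasis (e : ℕ) : Fin 6 → M :=
  ![x ^ (e + 1), x ^ e * y, y ^ (e + 1), y ^ e * z, z ^ (e + 1), z ^ e * x]

def cubicBasis : Fin 7 → M :=
  Matrix.vecCons (y * z ^ 2) (stableBasis 2)

theorem cuspFunctional_stableBasis (e : ℕ) (i j : Fin 6) :
    cuspFunctional i (stableBasis (e + 2) j) = if i = j then 1 else 0 := by
  fin_cases i <;> fin_cases j <;>
    simp [cuspFunctional, cuspValue, cuspSlope, stableBasis, x, y, z, cuspPoint, pow_succ]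

theorem linearIndependent_stableBasis_one : LinearIndependent ℂ (stableBasis 1) := by
  rw [Fintype.linearIndependent_iff]
  intro g hg i
  have h : ∀ k, ∑ j, g j * cuspFunctional k (stableBasis 1 j) = 0 := fun k => by
    simpa using congrArg (cuspFunctional k) hg
  have h0 := h 0
  have h1 := h 1
  have h2 := h 2
  have h3 := h 3
  have h4 := h 4
  have h5 := h 5
  simp [Fin.sum_univ_six, cuspFunctional, cuspValue, cuspSlope, stableBasis, x, y, z, cuspPoint]
    at h0 h1 h2 h3 h4 h5
  fin_cases i <;> simp only [Fin.reduceFinMk]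
  · linear_combination h0
  · linear_combination (h1 + h3 - h5) / 2
  · linear_combination h2
  · linear_combination (h3 + h5 - h1) / 2
  · linear_combination h4
  · linear_combination (h1 + h5 - h3) / 2

theorem M₁_pow_succ_le {n : ℕ} {s t : Set M} (hs : M₁ ^ n ≤ span ℂ s)
    (hst : ∀ a ∈ s, a * x ∈ span ℂ t ∧ a * y ∈ span ℂ t ∧ a * z ∈ span ℂ t) :
    M₁ ^ (n + 1) ≤ span ℂ t :=
  span_pow_succ_le hs fun a ha b hb => by
    rw [range_gen] at hb
    obtain ⟨hx, hy, hz⟩ := hst a ha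
    rcases hb with rfl | rfl | rfl <;> assumption

theorem M₁_pow_two_le : M₁ ^ 2 ≤ span ℂ (range (stableBasis 1)) := by
  refine M₁_pow_succ_le (s := {x, y, z}) (by rw [Submodule.pow_one, ← range_gen]) ?_
  set T := span ℂ (range (stableBasis 1))
  obtain ⟨h0, h1, h2, h3, h4, h5⟩ : x ^ 2 ∈ T ∧ x * y ∈ T ∧ y ^ 2 ∈ T ∧ y * z ∈ T ∧ z ^ 2 ∈ T ∧
      z * x ∈ T :=
    ⟨subset_span ⟨0, rfl⟩, subset_span ⟨1, by simp [stableBasis]⟩, subset_span ⟨2, rfl⟩,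
      subset_span ⟨3, by simp [stableBasis]⟩, subset_span ⟨4, rfl⟩,
      subset_span ⟨5, by simp [stableBasis]⟩⟩
  simp only [mem_insert_iff, mem_singleton_iff, forall_eq_or_imp, forall_eq]
  exact ⟨⟨mem_of_eq_of_mem (sq x).symm h0, h1, mem_of_eq_of_mem (mul_comm x z) h5⟩,
    ⟨mem_of_eq_of_mem (mul_comm y x) h1, mem_of_eq_of_mem (sq y).symm h2, h3⟩,
    ⟨h5, mem_of_eq_of_mem (mul_comm z y) h3, mem_of_eq_of_mem (sq z).symm h4⟩⟩

theorem M₁_pow_three_le : M₁ ^ 3 ≤ span ℂ (range cubicBasis) := by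
  refine M₁_pow_succ_le M₁_pow_two_le ?_
  set T := span ℂ (range cubicBasis)
  obtain ⟨h0, h1, h2, h3, h4, h5, h6⟩ : y * z ^ 2 ∈ T ∧ x ^ 3 ∈ T ∧ x ^ 2 * y ∈ T ∧ y ^ 3 ∈ T ∧
      y ^ 2 * z ∈ T ∧ z ^ 3 ∈ T ∧ z ^ 2 * x ∈ T :=
    ⟨subset_span ⟨0, rfl⟩, subset_span ⟨1, rfl⟩, subset_span ⟨2, rfl⟩, subset_span ⟨3, rfl⟩,
      subset_span ⟨4, rfl⟩, subset_span ⟨5, rfl⟩, subset_span ⟨6, rfl⟩⟩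
  have hxyy : x * y ^ 2 ∈ T := mem_of_eq_of_mem x_mul_y_sq (sub_mem (add_mem h4 h0) h6)
  have hxxz : x ^ 2 * z ∈ T := mem_of_eq_of_mem x_sq_mul_z (sub_mem (add_mem h2 h0) h6)
  have hxyz : x * y * z ∈ T := mem_of_eq_of_mem x_mul_y_mul_z_eq_zero (zero_mem _)
  rintro _ ⟨j, rfl⟩
  fin_cases j <;> simp only [stableBasis, Fin.reduceFinMk, Matrix.cons_val]
  · exact ⟨mem_of_eq_of_mem (by ring) h1, mem_of_eq_of_mem (by ring) h2,
      mem_of_eq_of_mem (by ring) hxxz⟩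
  · exact ⟨mem_of_eq_of_mem (by ring) h2, mem_of_eq_of_mem (by ring) hxyy,
      mem_of_eq_of_mem (by ring) hxyz⟩
  · exact ⟨mem_of_eq_of_mem (by ring) hxyy, mem_of_eq_of_mem (by ring) h3,
      mem_of_eq_of_mem (by ring) h4⟩
  · exact ⟨mem_of_eq_of_mem (by ring) hxyz, mem_of_eq_of_mem (by ring) h4,
      mem_of_eq_of_mem (by ring) h0⟩
  · exact ⟨mem_of_eq_of_mem (by ring) h6, mem_of_eq_of_mem (by ring) h0,
      mem_of_eq_of_mem (by ring) h5⟩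
  · exact ⟨mem_of_eq_of_mem (by ring) hxxz, mem_of_eq_of_mem (by ring) hxyz,
      mem_of_eq_of_mem (by ring) h6⟩

theorem stableBasis_mul_gen_mem (e : ℕ) : ∀ a ∈ range (stableBasis (e + 2)),
    a * x ∈ span ℂ (range (stableBasis (e + 3))) ∧
      a * y ∈ span ℂ (range (stableBasis (e + 3))) ∧
      a * z ∈ span ℂ (range (stableBasis (e + 3))) := by
  set T := span ℂ (range (stableBasis (e + 3)))
  obtain ⟨h0, h1, h2, h3, h4, h5⟩ : x ^ (e + 4) ∈ T ∧ x ^ (e + 3) * y ∈ T ∧ y ^ (e + 4) ∈ T ∧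
      y ^ (e + 3) * z ∈ T ∧ z ^ (e + 4) ∈ T ∧ z ^ (e + 3) * x ∈ T :=
    ⟨subset_span ⟨0, rfl⟩, subset_span ⟨1, rfl⟩, subset_span ⟨2, rfl⟩, subset_span ⟨3, rfl⟩,
      subset_span ⟨4, rfl⟩, subset_span ⟨5, rfl⟩⟩
  have hzero : (0 : M) ∈ T := zero_mem _
  rintro _ ⟨j, rfl⟩
  fin_cases j <;> simp only [stableBasis, Fin.reduceFinMk, Matrix.cons_val]
  · exact ⟨mem_of_eq_of_mem (by ring) h0, mem_of_eq_of_mem (by ring) h1,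
      mem_of_eq_of_mem (by linear_combination x ^ e * z_mul_x_pow_three) h1⟩
  · exact ⟨mem_of_eq_of_mem (by ring) h1,
      mem_of_eq_of_mem (by linear_combination x ^ e * x_sq_mul_y_sq_eq_zero) hzero,
      mem_of_eq_of_mem (by linear_combination x ^ (e + 1) * x_mul_y_mul_z_eq_zero) hzero⟩
  · exact ⟨mem_of_eq_of_mem (by linear_combination y ^ e * x_mul_y_pow_three) h3,
      mem_of_eq_of_mem (by ring) h2, mem_of_eq_of_mem (by ring) h3⟩
  · exact ⟨mem_of_eq_of_mem (by linear_combination y ^ (e + 1) * x_mul_y_mul_z_eq_zero) hzero,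
      mem_of_eq_of_mem (by ring) h3,
      mem_of_eq_of_mem (by linear_combination y ^ e * y_sq_mul_z_sq_eq_zero) hzero⟩
  · exact ⟨mem_of_eq_of_mem (by ring) h5,
      mem_of_eq_of_mem (by linear_combination z ^ e * y_mul_z_pow_three) h5,
      mem_of_eq_of_mem (by ring) h4⟩
  · exact ⟨mem_of_eq_of_mem (by linear_combination z ^ e * z_sq_mul_x_sq_eq_zero) hzero,
      mem_of_eq_of_mem (by linear_combination z ^ (e + 1) * x_mul_y_mul_z_eq_zero) hzero,
      mem_of_eq_of_mem (by ring) h5⟩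

theorem M₁_pow_add_four_le (e : ℕ) : M₁ ^ (e + 4) ≤ span ℂ (range (stableBasis (e + 3))) := by
  induction e with
  | zero =>
    refine M₁_pow_succ_le M₁_pow_three_le ?_
    rintro _ ⟨j, rfl⟩
    refine Fin.cases ?_ (fun j => stableBasis_mul_gen_mem 0 _ ⟨j, rfl⟩) j
    have h5 : z ^ 3 * x ∈ span ℂ (range (stableBasis 3)) := subset_span ⟨5, rfl⟩
    simp only [cubicBasis, Matrix.cons_val_zero]
    exact ⟨mem_of_eq_of_mem (by linear_combination z * x_mul_y_mul_z_eq_zero) (zero_mem _),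
      mem_of_eq_of_mem (by linear_combination y_sq_mul_z_sq_eq_zero) (zero_mem _),
      mem_of_eq_of_mem (by linear_combination y_mul_z_pow_three) h5⟩
  | succ e ih => exact M₁_pow_succ_le ih (stableBasis_mul_gen_mem (e + 1))

theorem stableBasis_mem (e : ℕ) (j : Fin 6) : stableBasis e j ∈ M₁ ^ (e + 1) := by
  fin_cases j
  · exact pow_mem_pow _ (gen_mem_M₁ 0) _
  · exact pow_mul_mem_pow_succ (gen_mem_M₁ 0) (gen_mem_M₁ 1) e
  · exact pow_mem_pow _ (gen_mem_M₁ 1) _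
  · exact pow_mul_mem_pow_succ (gen_mem_M₁ 1) (gen_mem_M₁ 2) e
  · exact pow_mem_pow _ (gen_mem_M₁ 2) _
  · exact pow_mul_mem_pow_succ (gen_mem_M₁ 2) (gen_mem_M₁ 0) e

theorem cubicBasis_mem (j : Fin 7) : cubicBasis j ∈ M₁ ^ 3 := by
  refine Fin.cases ?_ (stableBasis_mem 2) j
  exact mem_of_eq_of_mem (mul_comm y (z ^ 2))
    (pow_mul_mem_pow_succ (gen_mem_M₁ 2) (gen_mem_M₁ 1) 2)

theorem linearIndependent_cubicBasis : LinearIndependent ℂ cubicBasis := by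
  refine linearIndependent_finCons.mpr
    ⟨.of_dual_eq_ite (cuspFunctional_stableBasis 0), fun h => ?_⟩
  refine y_mul_z_sq_ne_z_sq_mul_x (sub_eq_zero.mp ?_)
  refine Module.eq_zero_of_mem_span_of_dual_eq_zero (cuspFunctional_stableBasis 0)
    (sub_mem h (subset_span ⟨5, rfl⟩)) fun i => ?_
  fin_cases i <;> simp [cuspFunctional, cuspValue, cuspSlope, x, y, z, cuspPoint]

theorem finrank_M₁_pow_zero : Module.finrank ℂ ↥(M₁ ^ 0) = 1 := by
  have := (cuspJet 0).toRingHom.domain_nontrivial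
  rw [Submodule.pow_zero, one_eq_span, finrank_span_singleton one_ne_zero]

theorem finrank_M₁_pow_one : Module.finrank ℂ ↥(M₁ ^ 1) = 3 := by
  rw [Submodule.pow_one]
  exact finrank_eq_of_le_span le_rfl gen_mem_M₁ (.of_dual_eq_ite cuspValue_gen)

theorem finrank_M₁_pow_two : Module.finrank ℂ ↥(M₁ ^ 2) = 6 :=
  finrank_eq_of_le_span M₁_pow_two_le (stableBasis_mem 1) linearIndependent_stableBasis_one

theorem finrank_M₁_pow_three : Module.finrank ℂ ↥(M₁ ^ 3) = 7 :=
  finrank_eq_of_le_span M₁_pow_three_le cubicBasis_mem linearIndependent_cubicBasis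

theorem finrank_M₁_pow_add_four (e : ℕ) : Module.finrank ℂ ↥(M₁ ^ (e + 4)) = 6 :=
  finrank_eq_of_le_span (M₁_pow_add_four_le e) (stableBasis_mem (e + 3))
    (.of_dual_eq_ite (cuspFunctional_stableBasis (e + 1)))

end ThreeCuspidalQuartic

theorem milnor_dims_three_cuspidal_quartic (f : S3)
    (hf : f = X 0 ^ 2 * X 1 ^ 2 + X 1 ^ 2 * X 2 ^ 2 + X 2 ^ 2 * X 0 ^ 2
      - 2 * X 0 * X 1 * X 2 * (X 0 + X 1 + X 2)) :
    gradedDim (jacobianIdeal f) 0 = 1 ∧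
    gradedDim (jacobianIdeal f) 1 = 3 ∧
    gradedDim (jacobianIdeal f) 2 = 6 ∧
    gradedDim (jacobianIdeal f) 3 = 7 ∧
    (∀ k : ℕ, 4 ≤ k → gradedDim (jacobianIdeal f) k = 6) := by
  open ThreeCuspidalQuartic in
  obtain rfl : f = quartic := hf
  simp only [gradedDim_eq_finrank]
  refine ⟨finrank_M₁_pow_zero, finrank_M₁_pow_one, finrank_M₁_pow_two, finrank_M₁_pow_three,
    fun k hk => ?_⟩
  obtain ⟨e, rfl⟩ := Nat.exists_eq_add_of_le' hk
  exact finrank_M₁_pow_add_four e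

end
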